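/- Typing inversion for operation calls: If ty(op) = ∀α1…αn. A ↪ B and Γ ⊢ #op(v) : C in the polymorphic type system of λ_eff^ext, then there exist type variables β̄ and types D1,…,Dn such that Γ, β̄ ⊢ Di for each i, Γ, β̄ ⊢ v : A[D1/α1, …, Dn/αn], and Γ ⊢ ∀β̄. (B[D1/α1, …, Dn/αn]) ⊑ C. -/
import Mathlib


set_option maxHeartbeats 1000000

namespace SigRes

/-! ## Types of λ_eff^ext -/

/-- Types: type variables, base types, function, universal, product, sum, list. -/
inductive Ty : Type where
  | var  : ℕ → Ty
  | base : ℕ → Ty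
  | fn   : Ty → Ty → Ty
  | all  : ℕ → Ty → Ty
  | prod : Ty → Ty → Ty
  | sum  : Ty → Ty → Ty
  | list : Ty → Ty

/-- Free type variables. -/
def ftv : Ty → Finset ℕ
  | Ty.var a    => {a}
  | Ty.base _   => ∅
  | Ty.fn A B   => ftv A ∪ ftv B
  | Ty.all a A  => ftv A \ {a}
  | Ty.prod A B => ftv A ∪ ftv B
  | Ty.sum A B  => ftv A ∪ ftv B
  | Ty.list A   => ftv A

/-- Simultaneous type substitution by a map (binders shadow). -/
def substMap : (ℕ → Ty) → Ty → Ty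
  | σ, Ty.var a    => σ a
  | _, Ty.base i   => Ty.base i
  | σ, Ty.fn A B   => Ty.fn (substMap σ A) (substMap σ B)
  | σ, Ty.all a A  => Ty.all a (substMap (Function.update σ a (Ty.var a)) A)
  | σ, Ty.prod A B => Ty.prod (substMap σ A) (substMap σ B)
  | σ, Ty.sum A B  => Ty.sum (substMap σ A) (substMap σ B)
  | σ, Ty.list A   => Ty.list (substMap σ A)

/-- `subst1 A b B` is `A[B/b]`. -/
def subst1 (A : Ty) (b : ℕ) (B : Ty) : Ty :=
  substMap (Function.update Ty.var b B) A

def lookupTy : List (ℕ × Ty) → ℕ → Option Ty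
  | [], _ => none
  | (a, B) :: rest, b => if a = b then some B else lookupTy rest b

/-- Simultaneous substitution `A[Bs/as]`. -/
def msubst (A : Ty) (as : List ℕ) (Bs : List Ty) : Ty :=
  substMap (fun b => (lookupTy (as.zip Bs) b).getD (Ty.var b)) A

/-- `∀ a1. … ∀ an. A`. -/
def Ty.alls : List ℕ → Ty → Ty
  | [], A => A
  | a :: as, A => Ty.all a (Ty.alls as A)

/-! ## Polarity of occurrences of a type variable -/

mutual
/-- Every occurrence of `b` in the type is positive. -/
def posOnly (b : ℕ) : Ty → Prop
  | Ty.var _    => True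
  | Ty.base _   => True
  | Ty.fn A B   => negOnly b A ∧ posOnly b B
  | Ty.all a A  => a = b ∨ posOnly b A
  | Ty.prod A B => posOnly b A ∧ posOnly b B
  | Ty.sum A B  => posOnly b A ∧ posOnly b B
  | Ty.list A   => posOnly b A

/-- Every occurrence of `b` in the type is negative. -/
def negOnly (b : ℕ) : Ty → Prop
  | Ty.var a    => a ≠ b
  | Ty.base _   => True
  | Ty.fn A B   => posOnly b A ∧ negOnly b B
  | Ty.all a A  => a = b ∨ negOnly b A
  | Ty.prod A B => negOnly b A ∧ negOnly b B
  | Ty.sum A B  => negOnly b A ∧ negOnly b B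
  | Ty.list A   => negOnly b A
end

/-- Every occurrence of `b` in the type is negative or strictly positive. -/
def negOrSPos (b : ℕ) : Ty → Prop
  | Ty.var _    => True
  | Ty.base _   => True
  | Ty.fn A B   => posOnly b A ∧ negOrSPos b B
  | Ty.all a A  => a = b ∨ negOrSPos b A
  | Ty.prod A B => negOrSPos b A ∧ negOrSPos b B
  | Ty.sum A B  => negOrSPos b A ∧ negOrSPos b B
  | Ty.list A   => negOrSPos b A

/-! ## Typing contexts -/

inductive Binding : Type where
  | tmVar : ℕ → Ty → Binding
  | tyVar : ℕ → Binding

/-- Typing contexts; the most recently added binding is at the head. -/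
abbrev Ctx := List Binding

def tmDom : Ctx → Finset ℕ
  | [] => ∅
  | Binding.tmVar x _ :: Γ => insert x (tmDom Γ)
  | Binding.tyVar _ :: Γ => tmDom Γ

def tyDom : Ctx → Finset ℕ
  | [] => ∅
  | Binding.tmVar _ _ :: Γ => tyDom Γ
  | Binding.tyVar a :: Γ => insert a (tyDom Γ)

def domAll (Γ : Ctx) : Finset ℕ := tmDom Γ ∪ tyDom Γ

/-- Well-formed typing contexts: pairwise-distinct bound (type) variables, and
    all bound types well formed under the preceding bindings. -/
inductive WfCtx : Ctx → Prop where
  | nil : WfCtx []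
  | tm {Γ : Ctx} {x : ℕ} {A : Ty} :
      WfCtx Γ → x ∉ tmDom Γ → ftv A ⊆ tyDom Γ → WfCtx (Binding.tmVar x A :: Γ)
  | ty {Γ : Ctx} {a : ℕ} :
      WfCtx Γ → a ∉ tyDom Γ → WfCtx (Binding.tyVar a :: Γ)

/-- `Γ ⊢ A` : the type `A` is well formed under `Γ`. -/
def WfTy (Γ : Ctx) (A : Ty) : Prop := WfCtx Γ ∧ ftv A ⊆ tyDom Γ

/-- `Γ, a1, …, an` (type-variable extension). -/
def extendTys (Γ : Ctx) (as : List ℕ) : Ctx := (as.map Binding.tyVar).reverse ++ Γ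

/-- A context consisting only of type-variable bindings. -/
def TyVarOnly (Γ : Ctx) : Prop := ∀ b ∈ Γ, ∃ a, b = Binding.tyVar a

/-! ## Type containment -/

inductive TySub : Ctx → Ty → Ty → Prop where
  | refl {Γ A} : WfCtx Γ → ftv A ⊆ tyDom Γ → TySub Γ A A
  | trans {Γ A B C} : TySub Γ A B → TySub Γ B C → TySub Γ A C
  | inst {Γ a A B} : WfCtx Γ → ftv B ⊆ tyDom Γ →
      TySub Γ (Ty.all a A) (subst1 A a B)
  | gen {Γ a A} : a ∉ ftv A → TySub Γ A (Ty.all a A)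
  | poly {Γ a A B} : TySub (Binding.tyVar a :: Γ) A B →
      TySub Γ (Ty.all a A) (Ty.all a B)
  | fn {Γ A1 A2 B1 B2} : TySub Γ B1 A1 → TySub Γ A2 B2 →
      TySub Γ (Ty.fn A1 A2) (Ty.fn B1 B2)
  | prod {Γ A1 A2 B1 B2} : TySub Γ A1 B1 → TySub Γ A2 B2 →
      TySub Γ (Ty.prod A1 A2) (Ty.prod B1 B2)
  | sum {Γ A1 A2 B1 B2} : TySub Γ A1 B1 → TySub Γ A2 B2 →
      TySub Γ (Ty.sum A1 A2) (Ty.sum B1 B2)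
  | list {Γ A B} : TySub Γ A B → TySub Γ (Ty.list A) (Ty.list B)
  | dfun {Γ a A B} : a ∉ ftv A →
      TySub Γ (Ty.all a (Ty.fn A B)) (Ty.fn A (Ty.all a B))
  | dprod {Γ a A B} :
      TySub Γ (Ty.all a (Ty.prod A B)) (Ty.prod (Ty.all a A) (Ty.all a B))
  | dsum {Γ a A B} :
      TySub Γ (Ty.all a (Ty.sum A B)) (Ty.sum (Ty.all a A) (Ty.all a B))
  | dlist {Γ a A} :
      TySub Γ (Ty.all a (Ty.list A)) (Ty.list (Ty.all a A))

/-! ## Operation signatures -/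

/-- `ty(op) = ∀ tvars. dom ↪ cod`, a closed type signature. -/
structure OpSig : Type where
  tvars : List ℕ
  nodup : tvars.Nodup
  dom : Ty
  cod : Ty
  closed_dom : ftv dom ⊆ tvars.toFinset
  closed_cod : ftv cod ⊆ tvars.toFinset

/-- The signature restriction. -/
def OpSig.SR (s : OpSig) : Prop :=
  (∀ a ∈ s.tvars, negOrSPos a s.dom) ∧ (∀ a ∈ s.tvars, posOnly a s.cod)

/-! ## Terms and handlers -/

mutual
inductive Term : Type where
  | var : ℕ → Term
  | const : ℕ → Term
  | lam : ℕ → Term → Term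
  | app : Term → Term → Term
  | op : ℕ → Term → Term
  | handle : Term → Handler → Term
  | pair : Term → Term → Term
  | proj1 : Term → Term
  | proj2 : Term → Term
  | inl : Term → Term
  | inr : Term → Term
  | scase : Term → ℕ → Term → ℕ → Term → Term
  | nil : Term
  | cons : Term → Term
  | lcase : Term → Term → ℕ → Term → Term
  | fix : ℕ → ℕ → Term → Term

inductive Handler : Type where
  | ret : ℕ → Term → Handler
  | opClause : Handler → ℕ → ℕ → ℕ → Term → Handler
end

/-- The return clause of a handler. -/
def Handler.retClause : Handler → ℕ × Term
  | Handler.ret x M => (x, M)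
  | Handler.opClause H _ _ _ _ => H.retClause

/-- The operation clause of a handler for a given operation (if any). -/
def Handler.lookup : Handler → ℕ → Option (ℕ × ℕ × Term)
  | Handler.ret _ _, _ => none
  | Handler.opClause H o' x k M, o => if o' = o then some (x, k, M) else H.lookup o

mutual
/-- Term substitution `M[N/x]` (binders shadow). -/
def Term.subst : Term → ℕ → Term → Term
  | Term.var y, x, N => if y = x then N else Term.var y
  | Term.const c, _, _ => Term.const c
  | Term.lam y M, x, N => if y = x then Term.lam y M else Term.lam y (M.subst x N)
  | Term.app M1 M2, x, N => Term.app (M1.subst x N) (M2.subst x N)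
  | Term.op o M, x, N => Term.op o (M.subst x N)
  | Term.handle M H, x, N => Term.handle (M.subst x N) (H.subst x N)
  | Term.pair M1 M2, x, N => Term.pair (M1.subst x N) (M2.subst x N)
  | Term.proj1 M, x, N => Term.proj1 (M.subst x N)
  | Term.proj2 M, x, N => Term.proj2 (M.subst x N)
  | Term.inl M, x, N => Term.inl (M.subst x N)
  | Term.inr M, x, N => Term.inr (M.subst x N)
  | Term.scase M y M1 z M2, x, N =>
      Term.scase (M.subst x N) y (if y = x then M1 else M1.subst x N)
        z (if z = x then M2 else M2.subst x N)
  | Term.nil, _, _ => Term.nil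
  | Term.cons M, x, N => Term.cons (M.subst x N)
  | Term.lcase M M1 y M2, x, N =>
      Term.lcase (M.subst x N) (M1.subst x N) y (if y = x then M2 else M2.subst x N)
  | Term.fix f y M, x, N =>
      if f = x ∨ y = x then Term.fix f y M else Term.fix f y (M.subst x N)

def Handler.subst : Handler → ℕ → Term → Handler
  | Handler.ret y M, x, N => Handler.ret y (if y = x then M else M.subst x N)
  | Handler.opClause H o y k M, x, N =>
      Handler.opClause (H.subst x N) o y k (if y = x ∨ k = x then M else M.subst x N)
end

/-- Values. -/
inductive IsValue : Term → Prop where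
  | const {c} : IsValue (Term.const c)
  | lam {x M} : IsValue (Term.lam x M)
  | pair {v1 v2} : IsValue v1 → IsValue v2 → IsValue (Term.pair v1 v2)
  | inl {v} : IsValue v → IsValue (Term.inl v)
  | inr {v} : IsValue v → IsValue (Term.inr v)
  | nil : IsValue Term.nil
  | cons {v} : IsValue v → IsValue (Term.cons v)

mutual
/-- Free term variables of a term. -/
def fvTerm : Term → Finset ℕ
  | Term.var x => {x}
  | Term.const _ => ∅
  | Term.lam x M => fvTerm M \ {x}
  | Term.app M1 M2 => fvTerm M1 ∪ fvTerm M2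
  | Term.op _ M => fvTerm M
  | Term.handle M H => fvTerm M ∪ fvHandler H
  | Term.pair M1 M2 => fvTerm M1 ∪ fvTerm M2
  | Term.proj1 M => fvTerm M
  | Term.proj2 M => fvTerm M
  | Term.inl M => fvTerm M
  | Term.inr M => fvTerm M
  | Term.scase M y M1 z M2 => fvTerm M ∪ (fvTerm M1 \ {y}) ∪ (fvTerm M2 \ {z})
  | Term.nil => ∅
  | Term.cons M => fvTerm M
  | Term.lcase M M1 y M2 => fvTerm M ∪ fvTerm M1 ∪ (fvTerm M2 \ {y})
  | Term.fix f y M => fvTerm M \ {f, y}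

def fvHandler : Handler → Finset ℕ
  | Handler.ret x M => fvTerm M \ {x}
  | Handler.opClause H _ x k M => fvHandler H ∪ (fvTerm M \ {x, k})
end

/-! ## Evaluation contexts -/

inductive ECtx : Type where
  | hole : ECtx
  | appL : ECtx → Term → ECtx
  | appR : (v : Term) → IsValue v → ECtx → ECtx
  | op : ℕ → ECtx → ECtx
  | handle : ECtx → Handler → ECtx
  | pairL : ECtx → Term → ECtx
  | pairR : (v : Term) → IsValue v → ECtx → ECtx
  | proj1 : ECtx → ECtx
  | proj2 : ECtx → ECtx
  | inl : ECtx → ECtx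
  | inr : ECtx → ECtx
  | scase : ECtx → ℕ → Term → ℕ → Term → ECtx
  | cons : ECtx → ECtx
  | lcase : ECtx → Term → ℕ → Term → ECtx

/-- `plug E M` is `E[M]`. -/
def plug : ECtx → Term → Term
  | ECtx.hole, M => M
  | ECtx.appL E M2, M => Term.app (plug E M) M2
  | ECtx.appR v _ E, M => Term.app v (plug E M)
  | ECtx.op o E, M => Term.op o (plug E M)
  | ECtx.handle E H, M => Term.handle (plug E M) H
  | ECtx.pairL E M2, M => Term.pair (plug E M) M2
  | ECtx.pairR v _ E, M => Term.pair v (plug E M)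
  | ECtx.proj1 E, M => Term.proj1 (plug E M)
  | ECtx.proj2 E, M => Term.proj2 (plug E M)
  | ECtx.inl E, M => Term.inl (plug E M)
  | ECtx.inr E, M => Term.inr (plug E M)
  | ECtx.scase E y M1 z M2, M => Term.scase (plug E M) y M1 z M2
  | ECtx.cons E, M => Term.cons (plug E M)
  | ECtx.lcase E M1 y M2, M => Term.lcase (plug E M) M1 y M2

/-- `op ∉ E` : the evaluation context is op-free. -/
def opFree (o : ℕ) : ECtx → Prop
  | ECtx.hole => True
  | ECtx.appL E _ => opFree o E
  | ECtx.appR _ _ E => opFree o E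
  | ECtx.op _ E => opFree o E
  | ECtx.handle E H => H.lookup o = none ∧ opFree o E
  | ECtx.pairL E _ => opFree o E
  | ECtx.pairR _ _ E => opFree o E
  | ECtx.proj1 E => opFree o E
  | ECtx.proj2 E => opFree o E
  | ECtx.inl E => opFree o E
  | ECtx.inr E => opFree o E
  | ECtx.scase E _ _ _ _ => opFree o E
  | ECtx.cons E => opFree o E
  | ECtx.lcase E _ _ _ => opFree o E

/-- Free term variables of an evaluation context. -/
def fvECtx : ECtx → Finset ℕ
  | ECtx.hole => ∅
  | ECtx.appL E M => fvECtx E ∪ fvTerm M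
  | ECtx.appR v _ E => fvTerm v ∪ fvECtx E
  | ECtx.op _ E => fvECtx E
  | ECtx.handle E H => fvECtx E ∪ fvHandler H
  | ECtx.pairL E M => fvECtx E ∪ fvTerm M
  | ECtx.pairR v _ E => fvTerm v ∪ fvECtx E
  | ECtx.proj1 E => fvECtx E
  | ECtx.proj2 E => fvECtx E
  | ECtx.inl E => fvECtx E
  | ECtx.inr E => fvECtx E
  | ECtx.scase E y M1 z M2 => fvECtx E ∪ (fvTerm M1 \ {y}) ∪ (fvTerm M2 \ {z})
  | ECtx.cons E => fvECtx E
  | ECtx.lcase E M1 y M2 => fvECtx E ∪ fvTerm M1 ∪ (fvTerm M2 \ {y})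

/-! ## Semantics -/

/-- Reduction `M1 ⤳ M2`, parameterized by the denotation `ζ` of constants. -/
inductive Reduce (zeta : ℕ → ℕ → Option ℕ) : Term → Term → Prop where
  | const {c1 c2 c} : zeta c1 c2 = some c →
      Reduce zeta (Term.app (Term.const c1) (Term.const c2)) (Term.const c)
  | beta {x M v} : IsValue v →
      Reduce zeta (Term.app (Term.lam x M) v) (M.subst x v)
  | ret {v H x M} : IsValue v → H.retClause = (x, M) →
      Reduce zeta (Term.handle v H) (M.subst x v)
  | handle {E o v H x k M y} : IsValue v → opFree o E →
      H.lookup o = some (x, k, M) →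
      y ∉ fvECtx E ∪ fvHandler H →
      Reduce zeta (Term.handle (plug E (Term.op o v)) H)
        ((M.subst x v).subst k (Term.lam y (Term.handle (plug E (Term.var y)) H)))
  | proj1 {v1 v2} : IsValue v1 → IsValue v2 →
      Reduce zeta (Term.proj1 (Term.pair v1 v2)) v1
  | proj2 {v1 v2} : IsValue v1 → IsValue v2 →
      Reduce zeta (Term.proj2 (Term.pair v1 v2)) v2
  | caseL {v y M1 z M2} : IsValue v →
      Reduce zeta (Term.scase (Term.inl v) y M1 z M2) (M1.subst y v)
  | caseR {v y M1 z M2} : IsValue v →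
      Reduce zeta (Term.scase (Term.inr v) y M1 z M2) (M2.subst z v)
  | lnil {M1 y M2} : Reduce zeta (Term.lcase Term.nil M1 y M2) M1
  | lcons {v M1 y M2} : IsValue v →
      Reduce zeta (Term.lcase (Term.cons v) M1 y M2) (M2.subst y v)
  | fix {f x M} :
      Reduce zeta (Term.fix f x M) ((Term.lam x M).subst f (Term.fix f x M))

/-- Evaluation `M1 ⟶ M2`. -/
def Step (zeta : ℕ → ℕ → Option ℕ) (M1 M2 : Term) : Prop :=
  ∃ E M1' M2', M1 = plug E M1' ∧ M2 = plug E M2' ∧ Reduce zeta M1' M2'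

/-- Multi-step evaluation `M1 ⟶* M2`. -/
def Steps (zeta : ℕ → ℕ → Option ℕ) : Term → Term → Prop :=
  Relation.ReflTransGen (Step zeta)

/-! ## Constants -/

/-- First-order types `ι1 → … → ιn → ι(n+1)`. -/
inductive FirstOrder : Ty → Prop where
  | base {i} : FirstOrder (Ty.base i)
  | fn {i A} : FirstOrder A → FirstOrder (Ty.fn (Ty.base i) A)

/-- Standing assumptions on the types of constants and the denotation `ζ`. -/
structure ConstAssum (tyc : ℕ → Ty) (zeta : ℕ → ℕ → Option ℕ) : Prop where
  firstOrder : ∀ c, FirstOrder (tyc c)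
  zeta_defined : ∀ c1 c2, (zeta c1 c2).isSome ↔
      ∃ i A, tyc c1 = Ty.fn (Ty.base i) A ∧ tyc c2 = Ty.base i
  zeta_ty : ∀ c1 c2 c i A, zeta c1 c2 = some c →
      tyc c1 = Ty.fn (Ty.base i) A → tyc c = A

/-! ## The polymorphic type system -/

mutual
inductive Typing (opty : ℕ → OpSig) (tyc : ℕ → Ty) : Ctx → Term → Ty → Prop where
  | var {Γ x A} : WfCtx Γ → Binding.tmVar x A ∈ Γ →
      Typing opty tyc Γ (Term.var x) A
  | const {Γ c} : WfCtx Γ → Typing opty tyc Γ (Term.const c) (tyc c)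
  | abs {Γ x A M B} : Typing opty tyc (Binding.tmVar x A :: Γ) M B →
      Typing opty tyc Γ (Term.lam x M) (Ty.fn A B)
  | app {Γ M1 M2 A B} : Typing opty tyc Γ M1 (Ty.fn A B) →
      Typing opty tyc Γ M2 A → Typing opty tyc Γ (Term.app M1 M2) B
  | gen {Γ a M A} : Typing opty tyc (Binding.tyVar a :: Γ) M A →
      Typing opty tyc Γ M (Ty.all a A)
  | inst {Γ M A B} : Typing opty tyc Γ M A → TySub Γ A B → WfCtx Γ →
      ftv B ⊆ tyDom Γ → Typing opty tyc Γ M B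
  | op {Γ o M Cs} : WfCtx Γ → Cs.length = (opty o).tvars.length →
      (∀ C ∈ Cs, ftv C ⊆ tyDom Γ) →
      Typing opty tyc Γ M (msubst (opty o).dom (opty o).tvars Cs) →
      Typing opty tyc Γ (Term.op o M) (msubst (opty o).cod (opty o).tvars Cs)
  | handle {Γ M H A B} : Typing opty tyc Γ M A → HTyping opty tyc Γ H A B →
      Typing opty tyc Γ (Term.handle M H) B
  | pair {Γ M1 M2 A B} : Typing opty tyc Γ M1 A → Typing opty tyc Γ M2 B →
      Typing opty tyc Γ (Term.pair M1 M2) (Ty.prod A B)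
  | proj1 {Γ M A B} : Typing opty tyc Γ M (Ty.prod A B) →
      Typing opty tyc Γ (Term.proj1 M) A
  | proj2 {Γ M A B} : Typing opty tyc Γ M (Ty.prod A B) →
      Typing opty tyc Γ (Term.proj2 M) B
  | inl {Γ M A B} : Typing opty tyc Γ M A → ftv B ⊆ tyDom Γ →
      Typing opty tyc Γ (Term.inl M) (Ty.sum A B)
  | inr {Γ M A B} : Typing opty tyc Γ M B → ftv A ⊆ tyDom Γ →
      Typing opty tyc Γ (Term.inr M) (Ty.sum A B)
  | scase {Γ M x M1 y M2 A B C} : Typing opty tyc Γ M (Ty.sum A B) →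
      Typing opty tyc (Binding.tmVar x A :: Γ) M1 C →
      Typing opty tyc (Binding.tmVar y B :: Γ) M2 C →
      Typing opty tyc Γ (Term.scase M x M1 y M2) C
  | nil {Γ A} : WfCtx Γ → ftv A ⊆ tyDom Γ →
      Typing opty tyc Γ Term.nil (Ty.list A)
  | cons {Γ M A} : Typing opty tyc Γ M (Ty.prod A (Ty.list A)) →
      Typing opty tyc Γ (Term.cons M) (Ty.list A)
  | lcase {Γ M M1 x M2 A B} : Typing opty tyc Γ M (Ty.list A) →
      Typing opty tyc Γ M1 B →
      Typing opty tyc (Binding.tmVar x (Ty.prod A (Ty.list A)) :: Γ) M2 B →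
      Typing opty tyc Γ (Term.lcase M M1 x M2) B
  | fix {Γ f x M A B} :
      Typing opty tyc (Binding.tmVar x A :: Binding.tmVar f (Ty.fn A B) :: Γ) M B →
      Typing opty tyc Γ (Term.fix f x M) (Ty.fn A B)

inductive HTyping (opty : ℕ → OpSig) (tyc : ℕ → Ty) : Ctx → Handler → Ty → Ty → Prop where
  | ret {Γ x M A B} : Typing opty tyc (Binding.tmVar x A :: Γ) M B →
      HTyping opty tyc Γ (Handler.ret x M) A B
  | op {Γ H o x k M A B} : HTyping opty tyc Γ H A B →
      Typing opty tyc
        (Binding.tmVar k (Ty.fn (opty o).cod B) ::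
          Binding.tmVar x (opty o).dom :: extendTys Γ (opty o).tvars) M B →
      HTyping opty tyc Γ (Handler.opClause H o x k M) A B
end

/-- `unqualify` removes all outermost universal quantifiers. -/
def unqualify : Ty → Ty
  | Ty.all _ A => unqualify A
  | A => A

/-- Substitution in all types bound in a context. -/
def ctxSubst (Γ : Ctx) (a : ℕ) (A : Ty) : Ctx :=
  Γ.map fun b => match b with
    | Binding.tmVar x B => Binding.tmVar x (subst1 B a A)
    | Binding.tyVar c => Binding.tyVar c


lemma ftv_substMap (A : Ty) (σ : ℕ → Ty) (S : Finset ℕ)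
    (h : ∀ a ∈ ftv A, ftv (σ a) ⊆ S) : ftv (substMap σ A) ⊆ S := by
  induction A generalizing σ S with
  | var a => simpa [substMap, ftv] using h a (by simp [ftv])
  | base i => simp [substMap, ftv]
  | fn A B ihA ihB =>
      simp only [substMap, ftv]
      exact Finset.union_subset (ihA _ _ fun a ha => h a (by simp [ftv, ha]))
        (ihB _ _ fun a ha => h a (by simp [ftv, ha]))
  | all a A ih =>
      simp only [substMap, ftv]
      intro b hb
      rcases Finset.mem_sdiff.mp hb with ⟨hb1, hb2⟩
      have key : ftv (substMap (Function.update σ a (Ty.var a)) A) ⊆ S ∪ {a} := by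
        apply ih
        intro c hc
        by_cases hca : c = a
        · subst hca; simp [Function.update_self, ftv]
        · rw [Function.update_of_ne hca]
          exact (h c (by simp [ftv, hc, hca])).trans Finset.subset_union_left
      rcases Finset.mem_union.mp (key hb1) with h' | h'
      · exact h'
      · exact absurd h' hb2
  | prod A B ihA ihB =>
      simp only [substMap, ftv]
      exact Finset.union_subset (ihA _ _ fun a ha => h a (by simp [ftv, ha]))
        (ihB _ _ fun a ha => h a (by simp [ftv, ha]))
  | sum A B ihA ihB =>
      simp only [substMap, ftv]
      exact Finset.union_subset (ihA _ _ fun a ha => h a (by simp [ftv, ha]))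
        (ihB _ _ fun a ha => h a (by simp [ftv, ha]))
  | list A ih =>
      simp only [substMap, ftv]
      exact ih _ _ fun a ha => h a (by simp [ftv, ha])

lemma lookup_zip_mem : ∀ (as : List ℕ) (Bs : List Ty) (b : ℕ), b ∈ as →
    as.length = Bs.length → ∃ C ∈ Bs, lookupTy (as.zip Bs) b = some C := by
  intro as
  induction as with
  | nil => intro Bs b hb; simp at hb
  | cons a as ih =>
      intro Bs b hb hlen
      cases Bs with
      | nil => simp at hlen
      | cons B Bs =>
          simp only [List.zip_cons_cons, lookupTy]
          by_cases hab : a = b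
          · exact ⟨B, by simp, by simp [hab]⟩
          · have hb' : b ∈ as := by
              rcases List.mem_cons.mp hb with h | h
              · exact absurd h.symm hab
              · exact h
            obtain ⟨C, hC, hl⟩ := ih Bs b hb' (by simpa using hlen)
            exact ⟨C, by simp [hC], by simpa [hab] using hl⟩

lemma ftv_msubst (A : Ty) (as : List ℕ) (Bs : List Ty) (S : Finset ℕ)
    (hlen : as.length = Bs.length) (hA : ftv A ⊆ as.toFinset)
    (hBs : ∀ B ∈ Bs, ftv B ⊆ S) : ftv (msubst A as Bs) ⊆ S := by
  apply ftv_substMap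
  intro a ha
  obtain ⟨C, hC, hl⟩ := lookup_zip_mem as Bs a (by simpa using hA ha) hlen
  rw [hl]
  exact hBs C hC

lemma extendTys_nil (Γ : Ctx) : extendTys Γ [] = Γ := rfl

lemma extendTys_cons (Γ : Ctx) (a : ℕ) (bs : List ℕ) :
    extendTys Γ (a :: bs) = extendTys (Binding.tyVar a :: Γ) bs := by
  simp [extendTys]

theorem typing_inversion_op_aux
    (opty : ℕ → OpSig) (tyc : ℕ → Ty) {Γ : Ctx} {M : Term} {C : Ty}
    (ht : Typing opty tyc Γ M C) : ∀ o v, M = Term.op o v →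
    ∃ (bs : List ℕ) (Ds : List Ty),
      Ds.length = (opty o).tvars.length ∧
      WfCtx (extendTys Γ bs) ∧
      (∀ D ∈ Ds, ftv D ⊆ tyDom (extendTys Γ bs)) ∧
      Typing opty tyc (extendTys Γ bs) v
        (msubst (opty o).dom (opty o).tvars Ds) ∧
      TySub Γ (Ty.alls bs (msubst (opty o).cod (opty o).tvars Ds)) C := by
  refine Typing.rec
    (motive_1 := fun Γ M C _ => ∀ o v, M = Term.op o v →
      ∃ (bs : List ℕ) (Ds : List Ty),
        Ds.length = (opty o).tvars.length ∧
        WfCtx (extendTys Γ bs) ∧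
        (∀ D ∈ Ds, ftv D ⊆ tyDom (extendTys Γ bs)) ∧
        Typing opty tyc (extendTys Γ bs) v
          (msubst (opty o).dom (opty o).tvars Ds) ∧
        TySub Γ (Ty.alls bs (msubst (opty o).cod (opty o).tvars Ds)) C)
    (motive_2 := fun _ _ _ _ _ => True)
    ?_ ?_ ?_ ?_ ?_ ?_ ?_ ?_ ?_ ?_ ?_ ?_ ?_ ?_ ?_ ?_ ?_ ?_ ?_ ?_ ht
  all_goals intros
  all_goals beta_reduce
  all_goals intros
  all_goals try trivial
  all_goals rename_i o v heq
  all_goals try (cases heq)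
  -- gen
  · rename_i Γ' a A htM ih
    obtain ⟨bs, Ds, h1, h2, h3, h4, h5⟩ := ih o v rfl
    exact ⟨a :: bs, Ds, h1, by rwa [extendTys_cons], by rwa [extendTys_cons],
      by rwa [extendTys_cons], TySub.poly h5⟩
  -- inst
  · rename_i Γ' A B hsub hwf hftv htM ih
    obtain ⟨bs, Ds, h1, h2, h3, h4, h5⟩ := ih o v rfl
    exact ⟨bs, Ds, h1, h2, h3, h4, TySub.trans h5 hsub⟩
  -- op
  · rename_i Γ' o' M' Cs hwf hlen hCs htM ih
    refine ⟨[], Cs, hlen, ?_, ?_, ?_, ?_⟩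
    · simpa [extendTys_nil] using hwf
    · simpa [extendTys_nil] using hCs
    · simpa [extendTys_nil] using htM
    · exact TySub.refl hwf (ftv_msubst _ _ _ _ hlen.symm (opty o').closed_cod hCs)

/-- **Typing inversion for operation calls**: if `ty(op) = ∀ᾱ.A ↪ B` and
`Γ ⊢ #op(v) : C`, then there are `β̄` and `D̄` with `Γ,β̄ ⊢ D` for each `D`,
`Γ,β̄ ⊢ v : A[D̄/ᾱ]`, and `Γ ⊢ ∀β̄.(B[D̄/ᾱ]) ⊑ C`. -/
theorem typing_inversion_op
    (opty : ℕ → OpSig) (tyc : ℕ → Ty)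
    (o : ℕ) (Γ : Ctx) (v : Term) (C : Ty)
    (hv : IsValue v)
    (ht : Typing opty tyc Γ (Term.op o v) C) :
    ∃ (bs : List ℕ) (Ds : List Ty),
      Ds.length = (opty o).tvars.length ∧
      WfCtx (extendTys Γ bs) ∧
      (∀ D ∈ Ds, ftv D ⊆ tyDom (extendTys Γ bs)) ∧
      Typing opty tyc (extendTys Γ bs) v
        (msubst (opty o).dom (opty o).tvars Ds) ∧
      TySub Γ (Ty.alls bs (msubst (opty o).cod (opty o).tvars Ds)) C :=
  typing_inversion_op_aux opty tyc ht o v rfl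

end SigRes
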